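/- Write P_{n,f}(f(q)) = q^{-n} + ∑_{m≥1} c_{n,m} q^m in ℂ((q)) (there is no constant term and no other negative terms). Then the coefficients satisfy the symmetry m · c_{n,m} = n · c_{m,n} for all m, n ≥ 1. -/

import Mathlib

/-!
Let `ϑ = q d/dq`. For polynomials `p, r`, the chain rule gives `ϑ(p(f)) · r(f) = ϑ(s(f))` with
`s' = p' r`, and a series in the image of `ϑ` has no constant term. Taking `p = P_n`, `r = P_m`
and writing `P_k(f) = q⁻ᵏ + (terms of positive degree)`, the constant term of `ϑ(P_n(f)) · P_m(f)`
is `m c_{n,m} - n c_{m,n}`, which therefore vanishes.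
-/

open HahnSeries

open Polynomial in
theorem Polynomial.derivative_surjective {K : Type*} [Field K] [CharZero K] :
    Function.Surjective (derivative : K[X] →ₗ[K] K[X]) := by
  intro p
  induction p using Polynomial.induction_on' with
  | add p q hp hq =>
    obtain ⟨r, rfl⟩ := hp
    obtain ⟨s, rfl⟩ := hq
    exact ⟨r + s, map_add _ r s⟩
  | monomial k a =>
    refine ⟨monomial (k + 1) (a / (k + 1)), ?_⟩
    have hk : (k + 1 : K) ≠ 0 := Nat.cast_add_one_ne_zero k
    rw [derivative_monomial, Nat.add_sub_cancel, Nat.cast_add_one, div_mul_cancel₀ _ hk]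

namespace LaurentSeries

section CommRing

variable {R : Type*} [CommRing R]

theorem coeff_algebraMap_mul (c : R) (x : LaurentSeries R) (n : ℤ) :
    (algebraMap R (LaurentSeries R) c * x).coeff n = c * x.coeff n := by
  simp [HahnSeries.algebraMap_apply']

/-- The Euler operator `ϑ = q d/dq`. -/
noncomputable def eulerDerivation : Derivation R (LaurentSeries R) (LaurentSeries R) where
  toFun x := ⟨fun n => (n : R) * x.coeff n, x.isPWO_support'.mono
    (Function.support_mul_subset_right _ _)⟩
  map_add' x y := by ext n; exact mul_add _ _ _
  map_smul' c x := by
    ext n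
    simp only [Algebra.smul_def, RingHom.id_apply, coeff_algebraMap_mul, coeff_smul]
    exact mul_left_comm _ _ _
  map_one_eq_zero' := by
    ext n
    simp only [LinearMap.coe_mk, AddHom.coe_mk, coeff_one, coeff_zero]
    split_ifs with h <;> simp [h]
  leibniz' x y := by
    ext n
    simp only [LinearMap.coe_mk, AddHom.coe_mk, smul_eq_mul, coeff_add]
    rw [mul_comm y, coeff_mul (x := x) (y := y), Finset.mul_sum,
      coeff_mul_right' y.isPWO_support ?hy, coeff_mul_left' x.isPWO_support ?hx,
      ← Finset.sum_add_distrib]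
    case hy | hx => exact Function.support_mul_subset_right _ _
    refine Finset.sum_congr rfl fun ij hij => ?_
    rw [← (Finset.mem_antidiagonal.mp hij).2.2]
    push_cast
    ring

@[simp]
theorem coeff_eulerDerivation (x : LaurentSeries R) (n : ℤ) :
    (eulerDerivation x).coeff n = n * x.coeff n :=
  rfl

theorem coeff_zero_eulerDerivation (x : LaurentSeries R) : (eulerDerivation x).coeff 0 = 0 := by
  simp

theorem eulerDerivation_single (n : ℤ) (r : R) :
    eulerDerivation (single n r : LaurentSeries R) = single n (n * r) := by
  ext k
  rw [coeff_eulerDerivation, coeff_single, coeff_single]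
  split_ifs with h
  · rw [h]
  · exact mul_zero _

theorem coeff_zero_mul_eq_zero {x y : LaurentSeries R} (hx : ∀ j ≤ 0, x.coeff j = 0)
    (hy : ∀ j ≤ 0, y.coeff j = 0) : (x * y).coeff 0 = 0 := by
  rw [coeff_mul]
  refine Finset.sum_eq_zero fun ij hij => ?_
  rw [Finset.mem_antidiagonal] at hij
  rcases le_or_gt ij.1 0 with h | h
  · rw [hx _ h, zero_mul]
  · rw [hy _ (by omega), mul_zero]

theorem natCast_mul_coeff_single_neg (m n : ℕ) (r : R) :
    (m : R) * (single (-n : ℤ) r : LaurentSeries R).coeff m = 0 := by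
  rw [coeff_single]
  split_ifs with h
  · rw [show m = 0 by omega, Nat.cast_zero, zero_mul]
  · exact mul_zero _

theorem coeff_zero_eulerDerivation_mul {x y : LaurentSeries R} {n m : ℕ}
    (hx : ∀ j ≤ 0, x.coeff j = (single (-n : ℤ) 1 : LaurentSeries R).coeff j)
    (hy : ∀ j ≤ 0, y.coeff j = (single (-m : ℤ) 1 : LaurentSeries R).coeff j) :
    (eulerDerivation x * y).coeff 0 = m * x.coeff m - n * y.coeff n := by
  set g := x - single (-n : ℤ) 1
  set h := y - single (-m : ℤ) 1
  have hg : ∀ j ≤ 0, (eulerDerivation g).coeff j = 0 := fun j hj => by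
    simp [g, hx j hj]
  have hh : ∀ j ≤ 0, h.coeff j = 0 := fun j hj => by simp [h, hy j hj]
  have hy_split : eulerDerivation x * y
      = eulerDerivation x * single (-m : ℤ) 1 + eulerDerivation x * h := by
    rw [← mul_add, add_sub_cancel]
  have hx_split : eulerDerivation x * h
      = eulerDerivation (single (-n : ℤ) 1) * h + eulerDerivation g * h := by
    rw [← add_mul, ← map_add, add_sub_cancel]
  have h_single_mul : (eulerDerivation (single (-n : ℤ) 1) * h).coeff 0 = -n * h.coeff n := by
    rw [eulerDerivation_single]
    simpa using coeff_single_mul_add (a := (n : ℤ)) (b := -n) (r := (-n : R)) (x := h)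
  have h_mul_single : (eulerDerivation x * single (-m : ℤ) 1).coeff 0 = m * x.coeff m := by
    simpa using coeff_mul_single_add (a := (m : ℤ)) (b := -m) (r := (1 : R)) (x := eulerDerivation x)
  rw [hy_split, coeff_add, h_mul_single, hx_split, coeff_add, h_single_mul,
    coeff_zero_mul_eq_zero hg hh, coeff_sub]
  linear_combination natCast_mul_coeff_single_neg n m (1 : R)

end CommRing

open Polynomial in
theorem coeff_zero_eulerDerivation_aeval_mul_aeval {K : Type*} [Field K] [CharZero K]
    (f : LaurentSeries K) (p r : K[X]) :
    (eulerDerivation (aeval f p) * aeval f r).coeff 0 = 0 := by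
  obtain ⟨s, hs⟩ := derivative_surjective (Polynomial.derivative p * r)
  have h : eulerDerivation (aeval f p) * aeval f r = eulerDerivation (aeval f s) := by
    simp only [Derivation.map_aeval, smul_eq_mul, hs, map_mul]
    ring
  rw [h, coeff_zero_eulerDerivation]

end LaurentSeries

open LaurentSeries in
theorem faber_coefficient_symmetry_general
    (f : LaurentSeries ℂ)
    (P : ℕ → Polynomial ℂ)
    (hP : ∀ n : ℕ, 1 ≤ n → (P n).Monic ∧ (P n).natDegree = n ∧
      ∀ m : ℤ, m ≤ 0 →
        ((HahnSeries.single (-(n : ℤ)) (1 : ℂ) : LaurentSeries ℂ)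
          - Polynomial.aeval f (P n)).coeff m = 0) :
    (∀ n : ℕ, 1 ≤ n →
      (Polynomial.aeval f (P n)).coeff (-(n : ℤ)) = 1 ∧
      ∀ m : ℤ, m ≤ 0 → m ≠ -(n : ℤ) → (Polynomial.aeval f (P n)).coeff m = 0) ∧
    (∀ m n : ℕ, 1 ≤ m → 1 ≤ n →
      (m : ℂ) * (Polynomial.aeval f (P n)).coeff (m : ℤ)
        = (n : ℂ) * (Polynomial.aeval f (P m)).coeff (n : ℤ)) := by
  have hPf : ∀ n, 1 ≤ n → ∀ j ≤ (0 : ℤ),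
      (Polynomial.aeval f (P n)).coeff j = (single (-n : ℤ) 1 : LaurentSeries ℂ).coeff j :=
    fun n hn j hj => by
      rw [eq_comm, ← sub_eq_zero, ← coeff_sub]
      exact (hP n hn).2.2 j hj
  refine ⟨fun n hn => ⟨?_, fun j hj hne => ?_⟩, fun m n hm hn => ?_⟩
  · rw [hPf n hn _ (by omega), coeff_single_same]
  · rw [hPf n hn j hj, coeff_single_of_ne hne]
  · have h := coeff_zero_eulerDerivation_mul (hPf n hn) (hPf m hm)
    rw [coeff_zero_eulerDerivation_aeval_mul_aeval] at h
    exact sub_eq_zero.mp h.symm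

/-- **Symmetry of the Faber polynomial coefficients.**
Let `f = q⁻¹ + ∑_{k ≥ 1} a_k q^k ∈ ℂ((q))`, with `n`-th Faber polynomial `P n` for `n ≥ 1`.
Writing `P_{n,f}(f(q)) = q⁻ⁿ + ∑_{m ≥ 1} c_{n,m} q^m` (there is no constant term and no other
negative term), the coefficients satisfy `m·c_{n,m} = n·c_{m,n}` for all `m, n ≥ 1`. -/
theorem faber_coefficient_symmetry
    (f : LaurentSeries ℂ)
    (hf_lead : f.coeff (-1) = 1)
    (hf_const : f.coeff 0 = 0)
    (hf_neg : ∀ m : ℤ, m < -1 → f.coeff m = 0)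
    (P : ℕ → Polynomial ℂ)
    (hP : ∀ n : ℕ, 1 ≤ n → (P n).Monic ∧ (P n).natDegree = n ∧
      ∀ m : ℤ, m ≤ 0 →
        ((HahnSeries.single (-(n : ℤ)) (1 : ℂ) : LaurentSeries ℂ)
          - Polynomial.aeval f (P n)).coeff m = 0) :
    (∀ n : ℕ, 1 ≤ n →
      (Polynomial.aeval f (P n)).coeff (-(n : ℤ)) = 1 ∧
      ∀ m : ℤ, m ≤ 0 → m ≠ -(n : ℤ) → (Polynomial.aeval f (P n)).coeff m = 0) ∧
    (∀ m n : ℕ, 1 ≤ m → 1 ≤ n →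
      (m : ℂ) * (Polynomial.aeval f (P n)).coeff (m : ℤ)
        = (n : ℂ) * (Polynomial.aeval f (P m)).coeff (n : ℤ)) :=
  faber_coefficient_symmetry_general f P hP
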